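/- Let C = {(x:y:z) ∈ ℙ²(ℂ) : x²·z - x·y² = 0} be the union of a smooth conic and a tangent line, and let p₁, …, pₙ ∈ C. If the stabilizer subgroup {g ∈ SL(3,ℂ) : g·C = C and g·pᵢ = pᵢ for all i} is infinite, then there exists k ∈ ℂ such that each pᵢ is either the tacnodal singularity (0:0:1) or lies on the line l = {(x:y:z) ∈ ℙ²(ℂ) : z = -k²·x + 2k·y}, which is tangent to the conic component of C. -/

import Mathlib

/-!
An element `g` of the stabilizer maps the line `x = 0` into the cubic, hence onto itself (the
conic contains no line), and then also preserves the conic. Comparing coefficients along the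
parametrisations `(0 : 1 : t)` and `(1 : t : t²)` shows that `g` is the substitution
`(x, y, z) ↦ (ax, bx + dy, (b²x + 2bdy + d²z) / a)`, which acts on the conic parameter as the
affine map `t ↦ (b + dt) / a` and fixes the tacnode `t = ∞`. Since the stabilizer is infinite and
the centre of `SL(3, ℂ)` is finite, some such `g` is not scalar. Either `a = d`, `b ≠ 0`, and the
tacnode is the only fixed point of `g` on the cubic, or every other fixed point lies on the tangent
line `z = -k²x + 2ky` to the conic at the fixed parameter `k = b / (a - d)`.
-/

open Matrix

noncomputable section

/-- The special linear group `SL(3, ℂ)`. -/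
abbrev SL3 := Matrix.SpecialLinearGroup (Fin 3) ℂ

/-- The complex projective plane `ℙ²(ℂ)`. -/
abbrev P2 := Projectivization ℂ (Fin 3 → ℂ)

/-- The action of `SL(3, ℂ)` on `ℙ²(ℂ)` induced by the linear action on `ℂ³`. -/
noncomputable def act (g : SL3) (p : P2) : P2 :=
  Projectivization.map (Matrix.SpecialLinearGroup.toLin' g).toLinearMap
    (Matrix.SpecialLinearGroup.toLin' g).injective p

/-- The union of a smooth conic and a tangent line, `{x²·z - x·y² = 0}`. -/
def Ctan : Set P2 := {p : P2 | p.rep 0 ^ 2 * p.rep 2 - p.rep 0 * p.rep 1 ^ 2 = 0}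

/-- The tacnodal point `(0:0:1)`. -/
def tacnode : P2 := Projectivization.mk ℂ ![0, 0, 1] (by
  intro h; simpa using congrFun h 2)

theorem Matrix.SpecialLinearGroup.finite_center {n : Type*} [Fintype n] [DecidableEq n]
    {R : Type*} [CommRing R] [IsDomain R] :
    (Subgroup.center (SpecialLinearGroup n R) : Set (SpecialLinearGroup n R)).Finite :=
  have : NeZero (max (Fintype.card n) 1) := ⟨by positivity⟩
  Set.finite_coe_iff.mp <|
    Finite.of_equiv _ SpecialLinearGroup.center_equiv_rootsOfUnity.symm.toEquiv

section TacnodalCubic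

variable {K : Type*} [Field K]

def tacnodalCubic (v : Fin 3 → K) : K := v 0 ^ 2 * v 2 - v 0 * v 1 ^ 2

theorem tacnodalCubic_smul (c : K) (v : Fin 3 → K) :
    tacnodalCubic (c • v) = c ^ 3 * tacnodalCubic v := by
  simp only [tacnodalCubic, Pi.smul_apply, smul_eq_mul]; ring

def PreservesTacnodalCubic (M : Matrix (Fin 3) (Fin 3) K) : Prop :=
  ∀ v, tacnodalCubic v = 0 → tacnodalCubic (M *ᵥ v) = 0

open Polynomial in
theorem PreservesTacnodalCubic.apply_zero_one_eq_zero_and_apply_zero_two_eq_zero [Infinite K]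
    {M : Matrix (Fin 3) (Fin 3) K} (hM : PreservesTacnodalCubic M) (hdet : M.det ≠ 0) :
    M 0 1 = 0 ∧ M 0 2 = 0 := by
  set α := M 0 1 * M 2 1 - M 1 1 ^ 2
  set β := M 0 1 * M 2 2 + M 0 2 * M 2 1 - 2 * M 1 1 * M 1 2
  set γ := M 0 2 * M 2 2 - M 1 2 ^ 2
  -- `tacnodalCubic (M *ᵥ ![0, 1, t])` factors as `(M 0 1 + M 0 2 * t) * (α + β * t + γ * t ^ 2)`.
  have hprod : (C (M 0 1) + C (M 0 2) * X) * (C α + C β * X + C γ * X ^ 2) = 0 :=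
    Polynomial.funext fun t => by
      have := hM ![0, 1, t] (by simp [tacnodalCubic])
      simp only [tacnodalCubic, mulVec, dotProduct, Fin.sum_univ_three, cons_val_zero, cons_val_one,
        cons_val, mul_zero, mul_one, zero_add] at this
      simp only [eval_mul, eval_add, eval_C, eval_X, eval_pow, eval_zero]
      linear_combination this
  by_contra hne
  have hlin : C (M 0 1) + C (M 0 2) * X ≠ 0 := fun h =>
    hne ⟨by simpa using congrArg (coeff · 0) h, by simpa using congrArg (coeff · 1) h⟩
  have hquad := (mul_eq_zero.mp hprod).resolve_left hlin
  have hα : α = 0 := by simpa using congrArg (coeff · 0) hquad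
  have hβ : β = 0 := by simpa using congrArg (coeff · 1) hquad
  have hγ : γ = 0 := by simpa using congrArg (coeff · 2) hquad
  -- So `xz - y²` vanishes on the span of the last two columns of `M`. Being nondegenerate, it has
  -- no isotropic plane: the columns are dependent, and the vanishing minors give a kernel vector.
  have hm1 : M 0 1 * M 1 2 - M 0 2 * M 1 1 = 0 := by
    refine pow_eq_zero_iff two_ne_zero |>.mp ?_
    linear_combination (M 0 1 * M 0 2) * hβ - M 0 1 ^ 2 * hγ - M 0 2 ^ 2 * hα
  have hm2 : M 0 1 * M 2 2 - M 0 2 * M 2 1 = 0 := by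
    refine pow_eq_zero_iff two_ne_zero |>.mp ?_
    linear_combination (β + 4 * M 1 1 * M 1 2) * hβ - (4 * γ + 4 * M 1 2 ^ 2) * hα
      - 4 * M 1 1 ^ 2 * hγ
  refine hdet (exists_mulVec_eq_zero_iff.mp ⟨![0, M 0 2, -M 0 1], ?_, ?_⟩)
  · simpa [funext_iff, Fin.forall_fin_succ, and_comm] using hne
  · ext i
    fin_cases i <;>
      simp only [mulVec, dotProduct, Fin.sum_univ_three, Fin.zero_eta, Fin.mk_one, Fin.reduceFinMk,
        cons_val_zero, cons_val_one, cons_val, mul_zero, zero_add, mul_neg, Pi.zero_apply]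
    · ring
    · linear_combination -hm1
    · linear_combination -hm2

/-- Maps the conic point `(1 : t : t²)` to `(1 : s : s²)` with `s = (b + d t) / a`. -/
def tacnodeStabilizerMatrix (a b d : K) : Matrix (Fin 3) (Fin 3) K :=
  !![a, 0, 0; b, d, 0; b ^ 2 / a, 2 * b * d / a, d ^ 2 / a]

open Polynomial in
theorem PreservesTacnodalCubic.eq_tacnodeStabilizerMatrix [Infinite K]
    {M : Matrix (Fin 3) (Fin 3) K} (hM : PreservesTacnodalCubic M) (hdet : M.det ≠ 0) :
    M = tacnodeStabilizerMatrix (M 0 0) (M 1 0) (M 1 1) := by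
  obtain ⟨h01, h02⟩ := hM.apply_zero_one_eq_zero_and_apply_zero_two_eq_zero hdet
  have ha : M 0 0 ≠ 0 := fun h => hdet (by rw [det_fin_three, h01, h02, h]; ring)
  -- `tacnodalCubic (M *ᵥ ![1, t, t ^ 2]) / M 0 0`, expanded in `t`.
  have hquartic : C (M 0 0 * M 2 0 - M 1 0 ^ 2) + C (M 0 0 * M 2 1 - 2 * M 1 0 * M 1 1) * X
      + C (M 0 0 * M 2 2 - M 1 1 ^ 2 - 2 * M 1 0 * M 1 2) * X ^ 2
      - C (2 * M 1 1 * M 1 2) * X ^ 3 - C (M 1 2 ^ 2) * X ^ 4 = 0 :=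
    Polynomial.funext fun t => by
      have := hM ![1, t, t ^ 2] (by simp [tacnodalCubic])
      simp only [tacnodalCubic, mulVec, dotProduct, Fin.sum_univ_three, cons_val_zero, cons_val_one,
        cons_val, h01, h02, mul_one, zero_mul, add_zero] at this
      simp only [eval_add, eval_sub, eval_mul, eval_C, eval_X, eval_pow, eval_zero]
      refine mul_left_cancel₀ ha ?_
      linear_combination this
  have hcoeff := fun n => congrArg (coeff · n) hquartic
  simp only [coeff_add, coeff_sub, coeff_C_mul_X_pow, coeff_C_mul_X, coeff_C, coeff_zero] at hcoeff
  have h12 : M 1 2 = 0 := by simpa using hcoeff 4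
  have c0 : M 0 0 * M 2 0 - M 1 0 ^ 2 = 0 := by simpa using hcoeff 0
  have c1 : M 0 0 * M 2 1 - 2 * M 1 0 * M 1 1 = 0 := by simpa using hcoeff 1
  have c2 : M 0 0 * M 2 2 - M 1 1 ^ 2 = 0 := by simpa [h12] using hcoeff 2
  ext i j
  fin_cases i <;> fin_cases j <;>
    simp only [tacnodeStabilizerMatrix, Fin.zero_eta, Fin.mk_one, Fin.reduceFinMk, of_apply,
      cons_val', cons_val_zero, cons_val_one, cons_val, cons_val_fin_one, h01, h02, h12,
      eq_div_iff ha]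
  · linear_combination c0
  · linear_combination c1
  · linear_combination c2

theorem tacnodeStabilizerMatrix_mulVec (a b d : K) (v : Fin 3 → K) :
    tacnodeStabilizerMatrix a b d *ᵥ v =
      ![a * v 0, b * v 0 + d * v 1, (b ^ 2 * v 0 + 2 * b * d * v 1 + d ^ 2 * v 2) / a] := by
  ext i
  fin_cases i <;>
    simp only [tacnodeStabilizerMatrix, mulVec, dotProduct, Fin.sum_univ_three, Fin.zero_eta,
      Fin.mk_one, Fin.reduceFinMk, of_apply, cons_val', cons_val_fin_one, cons_val_zero,
      cons_val_one, cons_val] <;>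
    ring

theorem ne_zero_of_det_tacnodeStabilizerMatrix_ne_zero {a b d : K}
    (h : (tacnodeStabilizerMatrix a b d).det ≠ 0) : a ≠ 0 ∧ d ≠ 0 := by
  constructor <;> rintro rfl <;> simp [tacnodeStabilizerMatrix, det_fin_three] at h

theorem tacnodeStabilizerMatrix_eq_scalar {a : K} (ha : a ≠ 0) :
    tacnodeStabilizerMatrix a 0 a = scalar (Fin 3) a := by
  ext i j
  fin_cases i <;> fin_cases j <;> simp [tacnodeStabilizerMatrix, ha, pow_two]

theorem tacnodeStabilizerMatrix_mulVec_eq_smul_iff {a b d μ : K} (ha : a ≠ 0) {v : Fin 3 → K} :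
    tacnodeStabilizerMatrix a b d *ᵥ v = μ • v ↔ a * v 0 = μ * v 0 ∧
      b * v 0 + d * v 1 = μ * v 1 ∧ b ^ 2 * v 0 + 2 * b * d * v 1 + d ^ 2 * v 2 = a * μ * v 2 := by
  rw [tacnodeStabilizerMatrix_mulVec, funext_iff, Fin.forall_fin_succ, Fin.forall_fin_succ,
    Fin.forall_fin_one]
  simp only [Pi.smul_apply, smul_eq_mul, cons_val_zero, Fin.succ_zero_eq_one,
    Fin.succ_one_eq_two, cons_val_one, cons_val_two, head_cons, tail_cons]
  rw [div_eq_iff ha]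
  constructor <;> rintro ⟨e0, e1, e2⟩ <;> exact ⟨e0, e1, by linear_combination e2⟩

theorem eq_zero_of_tacnodeStabilizerMatrix_self_mulVec_eq_smul [NeZero (2 : K)] {a b μ : K}
    (ha : a ≠ 0) (hb : b ≠ 0) {v : Fin 3 → K} (hv : tacnodeStabilizerMatrix a b a *ᵥ v = μ • v) :
    v 0 = 0 ∧ v 1 = 0 := by
  obtain ⟨e0, e1, e2⟩ := (tacnodeStabilizerMatrix_mulVec_eq_smul_iff ha).mp hv
  have h0 : v 0 = 0 := by
    by_contra h0
    have hμ : μ = a := (mul_right_cancel₀ h0 e0).symm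
    exact h0 ((mul_eq_zero.mp (by rw [hμ] at e1; linear_combination e1)).resolve_left hb)
  refine ⟨h0, ?_⟩
  by_contra h1
  have hμ : μ = a := mul_right_cancel₀ h1 (by linear_combination -e1 + b * h0)
  rw [hμ] at e2
  have : 2 * b * a * v 1 = 0 := by linear_combination e2 - b ^ 2 * h0
  simp [ha, hb, h1, two_ne_zero] at this

theorem eq_tangentLine_of_tacnodeStabilizerMatrix_mulVec_eq_smul {a b d μ : K} (ha : a ≠ 0)
    (hd : d ≠ 0) (had : a ≠ d) {v : Fin 3 → K} (hv : tacnodeStabilizerMatrix a b d *ᵥ v = μ • v)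
    (hF : tacnodalCubic v = 0) :
    (v 0 = 0 ∧ v 1 = 0) ∨ v 2 = -(b / (a - d)) ^ 2 * v 0 + 2 * (b / (a - d)) * v 1 := by
  obtain ⟨e0, e1, e2⟩ := (tacnodeStabilizerMatrix_mulVec_eq_smul_iff ha).mp hv
  have hsub : a - d ≠ 0 := sub_ne_zero.mpr had
  by_cases h0 : v 0 = 0
  · by_cases h1 : v 1 = 0
    · exact .inl ⟨h0, h1⟩
    right
    have hμ : μ = d := mul_right_cancel₀ h1 (by linear_combination -e1 + b * h0)
    rw [hμ] at e2
    have hv2 : (a - d) * v 2 = 2 * b * v 1 :=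
      mul_left_cancel₀ hd (by linear_combination -e2 + b ^ 2 * h0)
    rw [h0, mul_zero, zero_add, mul_comm 2, mul_assoc, div_mul_eq_mul_div, eq_div_iff hsub]
    linear_combination hv2
  · right
    have hμ : μ = a := (mul_right_cancel₀ h0 e0).symm
    rw [hμ] at e1
    have hv1 : v 1 = b / (a - d) * v 0 := by
      field_simp; linear_combination -e1
    have hv2 : v 2 = (b / (a - d)) ^ 2 * v 0 := by
      refine mul_left_cancel₀ (pow_ne_zero 2 h0) ?_
      unfold tacnodalCubic at hF
      rw [hv1] at hF
      linear_combination hF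
    rw [hv2, hv1]; ring

theorem exists_tangentLine_of_tacnodeStabilizerMatrix_mulVec_eq_smul [NeZero (2 : K)] {a b d : K}
    (hdet : (tacnodeStabilizerMatrix a b d).det ≠ 0)
    (hns : ∀ c, tacnodeStabilizerMatrix a b d ≠ scalar (Fin 3) c) :
    ∃ k : K, ∀ (v : Fin 3 → K) (μ : K), tacnodeStabilizerMatrix a b d *ᵥ v = μ • v →
      tacnodalCubic v = 0 →
      (v 0 = 0 ∧ v 1 = 0) ∨ v 2 = -k ^ 2 * v 0 + 2 * k * v 1 := by
  obtain ⟨ha, hd⟩ := ne_zero_of_det_tacnodeStabilizerMatrix_ne_zero hdet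
  by_cases had : a = d
  · subst had
    have hb : b ≠ 0 := by
      rintro rfl
      exact hns a (tacnodeStabilizerMatrix_eq_scalar ha)
    exact ⟨0, fun _ _ hv _ =>
      .inl (eq_zero_of_tacnodeStabilizerMatrix_self_mulVec_eq_smul ha hb hv)⟩
  · exact ⟨b / (a - d), fun _ _ hv hF =>
      eq_tangentLine_of_tacnodeStabilizerMatrix_mulVec_eq_smul ha hd had hv hF⟩

theorem exists_tangentLine_of_not_mem_center [Infinite K] [NeZero (2 : K)]
    {g : SpecialLinearGroup (Fin 3) K} (hg : g ∉ Subgroup.center (SpecialLinearGroup (Fin 3) K))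
    (hpres : PreservesTacnodalCubic (g : Matrix (Fin 3) (Fin 3) K)) :
    ∃ k : K, ∀ (v : Fin 3 → K) (μ : K), (g : Matrix (Fin 3) (Fin 3) K) *ᵥ v = μ • v →
      tacnodalCubic v = 0 →
      (v 0 = 0 ∧ v 1 = 0) ∨ v 2 = -k ^ 2 * v 0 + 2 * k * v 1 := by
  have hdet : (g : Matrix (Fin 3) (Fin 3) K).det ≠ 0 := by simp
  have hM := hpres.eq_tacnodeStabilizerMatrix hdet
  rw [hM] at hdet ⊢
  refine exists_tangentLine_of_tacnodeStabilizerMatrix_mulVec_eq_smul hdet fun c hc => hg ?_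
  refine Matrix.SpecialLinearGroup.mem_center_iff.mpr ⟨c, ?_, (hM.trans hc).symm⟩
  simpa [hM.trans hc] using g.2

end TacnodalCubic

section ProjectivePlane

open Projectivization

theorem Matrix.SpecialLinearGroup.mulVec_ne_zero {n R : Type*} [Fintype n] [DecidableEq n]
    [CommRing R] (g : SpecialLinearGroup n R) {v : n → R} (hv : v ≠ 0) :
    (g : Matrix n n R) *ᵥ v ≠ 0 :=
  (SpecialLinearGroup.toLin' g).map_ne_zero_iff.mpr hv

theorem act_mk (g : SL3) {v : Fin 3 → ℂ} (hv : v ≠ 0) :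
    act g (mk ℂ v hv) = mk ℂ ((g : Matrix (Fin 3) (Fin 3) ℂ) *ᵥ v) (g.mulVec_ne_zero hv) :=
  map_mk _ _ _ _

theorem mk_mem_Ctan_iff {v : Fin 3 → ℂ} (hv : v ≠ 0) : mk ℂ v hv ∈ Ctan ↔ tacnodalCubic v = 0 := by
  obtain ⟨a, ha⟩ := exists_smul_eq_mk_rep ℂ v hv
  change tacnodalCubic (mk ℂ v hv).rep = 0 ↔ _
  rw [← ha, Units.smul_def, tacnodalCubic_smul, mul_eq_zero_iff_left (pow_ne_zero 3 a.ne_zero)]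

theorem preservesTacnodalCubic_of_image_Ctan {g : SL3} (h : act g '' Ctan = Ctan) :
    PreservesTacnodalCubic (g : Matrix (Fin 3) (Fin 3) ℂ) := by
  intro v hv
  rcases eq_or_ne v 0 with rfl | hv0
  · simp [tacnodalCubic]
  have hmem : act g (mk ℂ v hv0) ∈ Ctan := h ▸ Set.mem_image_of_mem _ ((mk_mem_Ctan_iff hv0).mpr hv)
  rwa [act_mk, mk_mem_Ctan_iff] at hmem

theorem exists_mulVec_rep_eq_smul_of_act_eq {g : SL3} {p : P2} (h : act g p = p) :
    ∃ μ : ℂ, (g : Matrix (Fin 3) (Fin 3) ℂ) *ᵥ p.rep = μ • p.rep := by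
  have h' : mk ℂ _ (g.mulVec_ne_zero p.rep_nonzero) = mk ℂ p.rep p.rep_nonzero := by
    rw [← act_mk g p.rep_nonzero, mk_rep, h]
  exact ((mk_eq_mk_iff' ℂ _ _ _ _).mp h').imp fun _ => Eq.symm

theorem eq_tacnode_of_rep {p : P2} (h0 : p.rep 0 = 0) (h1 : p.rep 1 = 0) : p = tacnode := by
  rw [← p.mk_rep, tacnode, mk_eq_mk_iff']
  exact ⟨p.rep 2, by ext i; fin_cases i <;> simp [h0, h1]⟩

end ProjectivePlane

/-- If marked points on the conic-plus-tangent-line cubic have infinite `SL(3,ℂ)`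
stabilizer, then there is a `k ∈ ℂ` such that every marked point is the tacnode
`(0:0:1)` or lies on the tangent line `{z = -k²·x + 2k·y}`. -/
theorem conic_tangent_line_stabilizer (n : ℕ) (p : Fin n → P2)
    (hp : ∀ i, p i ∈ Ctan)
    (hstab : {g : SL3 | act g '' Ctan = Ctan ∧ ∀ i, act g (p i) = p i}.Infinite) :
    ∃ k : ℂ, ∀ i, p i = tacnode ∨
      (p i).rep 2 = -k ^ 2 * (p i).rep 0 + 2 * k * (p i).rep 1 := by
  obtain ⟨g, ⟨hgC, hgp⟩, hg⟩ := (hstab.sdiff Matrix.SpecialLinearGroup.finite_center).nonempty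
  obtain ⟨k, hk⟩ :=
    exists_tangentLine_of_not_mem_center hg (preservesTacnodalCubic_of_image_Ctan hgC)
  refine ⟨k, fun i => ?_⟩
  obtain ⟨μ, hμ⟩ := exists_mulVec_rep_eq_smul_of_act_eq (hgp i)
  exact (hk _ μ hμ (hp i)).imp (fun h => eq_tacnode_of_rep h.1 h.2) id
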